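/- arXiv:2401.12839 — 4 statements merged into one kernel-verified Lean document; each statement's English description precedes it below -/
import Mathlib

section
/- For n ≥ 2, the number of involutions in the even-signed permutation group D_{n+1} satisfies i^D_{n+1} = i^B_n + 2n·i^D_{n-1}, where i^B_n is the number of involutions in the hyperoctahedral group B_n. -/
/-- Negation on the signed set `{±1, …, ±n}`, modelled as `Fin n × Bool`
(the `Bool` component is the sign, `true` meaning positive). -/
def negS {n : ℕ} (x : Fin n × Bool) : Fin n × Bool := (x.1, !x.2)

/-- A permutation of the signed set is a signed permutation (an element of the
hyperoctahedral group `B_n`) when it commutes with negation. -/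
def IsSigned {n : ℕ} (π : Equiv.Perm (Fin n × Bool)) : Prop :=
  ∀ x, π (negS x) = negS (π x)

instance {n : ℕ} (π : Equiv.Perm (Fin n × Bool)) : Decidable (IsSigned π) :=
  inferInstanceAs (Decidable (∀ x, π (negS x) = negS (π x)))

/-- The number of negative entries in the one-line notation of a signed permutation. -/
def numNeg {n : ℕ} (π : Equiv.Perm (Fin n × Bool)) : ℕ :=
  (Finset.univ.filter fun i : Fin n => (π (i, true)).2 = false).card

/-- The number of involutions in the hyperoctahedral group `B_n`. -/
def numInvB (n : ℕ) : ℕ :=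
  (Finset.univ.filter fun π : Equiv.Perm (Fin n × Bool) => IsSigned π ∧ π * π = 1).card

/-- The number of involutions in the even-signed permutation group `D_n`. -/
def numInvD (n : ℕ) : ℕ :=
  (Finset.univ.filter fun π : Equiv.Perm (Fin n × Bool) =>
    IsSigned π ∧ π * π = 1 ∧ Even (numNeg π)).card

open Equiv Finset

namespace DRecAux

section Generic

variable {a b : ℕ} (g : Fin a ↪ Fin b)

/-- lift an embedding of index sets to the signed sets -/
def pmapE : Fin a × Bool ↪ Fin b × Bool :=
  ⟨fun y => (g y.1, y.2), by
    rintro ⟨y1, y2⟩ ⟨z1, z2⟩ h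
    simpa [Prod.ext_iff, g.injective.eq_iff] using h⟩

@[simp] lemma pmapE_apply (y : Fin a × Bool) : pmapE g y = (g y.1, y.2) := rfl

lemma pmapE_negS (y : Fin a × Bool) : pmapE g (negS y) = negS (pmapE g y) := rfl

lemma notMem_range {x : Fin b × Bool} (hx : ∀ y : Fin a, g y ≠ x.1) :
    x ∉ Set.range (pmapE g) := by
  rintro ⟨y, rfl⟩; exact hx y.1 rfl

lemma range_cases (x : Fin b × Bool) :
    (∃ y, pmapE g y = x) ∨ (∀ y : Fin a, g y ≠ x.1) := by
  by_cases h : ∃ v, g v = x.1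
  · obtain ⟨v, hv⟩ := h
    exact Or.inl ⟨(v, x.2), by rw [pmapE_apply, hv]⟩
  · push_neg at h; exact Or.inr h

/-- Extend a small signed permutation along `g`, completing by `c` off the range. -/
noncomputable def ext (ρ : Perm (Fin a × Bool)) (c : Perm (Fin b × Bool)) :
    Perm (Fin b × Bool) :=
  (ρ.viaEmbedding (pmapE g)) * c

variable (ρ : Perm (Fin a × Bool)) (c : Perm (Fin b × Bool))

lemma ext_mem (hcr : ∀ y, c (pmapE g y) = pmapE g y) (y : Fin a × Bool) :
    ext g ρ c (pmapE g y) = pmapE g (ρ y) := by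
  simp only [ext, Perm.mul_apply, hcr]
  exact ρ.viaEmbedding_apply (pmapE g) y

lemma ext_not (hcc : ∀ x, (∀ y, g y ≠ x.1) → ∀ y, g y ≠ (c x).1)
    {x : Fin b × Bool} (hx : ∀ y, g y ≠ x.1) : ext g ρ c x = c x := by
  simp only [ext, Perm.mul_apply]
  exact ρ.viaEmbedding_apply_of_notMem (pmapE g) _ (notMem_range g (hcc x hx))

lemma ext_signed (hρs : IsSigned ρ)
    (hcr : ∀ y, c (pmapE g y) = pmapE g y)
    (hcc : ∀ x, (∀ y, g y ≠ x.1) → ∀ y, g y ≠ (c x).1)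
    (hcs : ∀ x, c (negS x) = negS (c x)) : IsSigned (ext g ρ c) := by
  intro x
  rcases range_cases g x with ⟨y, rfl⟩ | hx
  · rw [← pmapE_negS, ext_mem g ρ c hcr, ext_mem g ρ c hcr, hρs y, pmapE_negS]
  · have hx' : ∀ y, g y ≠ (negS x).1 := hx
    rw [ext_not g ρ c hcc hx', ext_not g ρ c hcc hx, hcs]

lemma ext_sq (hρ2 : ρ * ρ = 1) (hc2 : c * c = 1)
    (hcr : ∀ y, c (pmapE g y) = pmapE g y)
    (hcc : ∀ x, (∀ y, g y ≠ x.1) → ∀ y, g y ≠ (c x).1) :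
    ext g ρ c * ext g ρ c = 1 := by
  have hρ2' : ∀ y, ρ (ρ y) = y := fun y => by
    rw [← Perm.mul_apply, hρ2, Perm.one_apply]
  have hc2' : ∀ x, c (c x) = x := fun x => by
    rw [← Perm.mul_apply, hc2, Perm.one_apply]
  refine Equiv.ext fun x => ?_
  rw [Perm.mul_apply, Perm.one_apply]
  rcases range_cases g x with ⟨y, rfl⟩ | hx
  · rw [ext_mem g ρ c hcr, ext_mem g ρ c hcr, hρ2']
  · rw [ext_not g ρ c hcc hx, ext_not g ρ c hcc (hcc x hx), hc2']

lemma numNeg_split (π : Perm (Fin b × Bool))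
    (h : ∀ i : Fin a, (π (g i, true)).2 = (ρ (i, true)).2) :
    numNeg π = numNeg ρ +
      (univ.filter fun i : Fin b =>
        (∀ y : Fin a, g y ≠ i) ∧ (π (i, true)).2 = false).card := by
  classical
  have key := Finset.card_filter_add_card_filter_not
    (s := univ.filter fun i : Fin b => (π (i, true)).2 = false)
    (p := fun i => ∃ y : Fin a, g y = i)
  have h1 : ((univ.filter fun i : Fin b => (π (i, true)).2 = false).filter
      (fun i => ∃ y : Fin a, g y = i)).card = numNeg ρ := by
    refine (Finset.card_bij (fun (y : Fin a) _ => g y) ?_ ?_ ?_).symm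
    · intro y hy
      simp only [mem_filter, mem_univ, true_and] at hy ⊢
      exact ⟨(h y).trans hy, y, rfl⟩
    · intro y1 _ y2 _ hgy
      exact g.injective hgy
    · intro i hi
      simp only [mem_filter, mem_univ, true_and] at hi
      obtain ⟨hPi, y, rfl⟩ := hi
      refine ⟨y, ?_, rfl⟩
      simp only [mem_filter, mem_univ, true_and, numNeg]
      rw [← h y]; exact hPi
  have h2 : ((univ.filter fun i : Fin b => (π (i, true)).2 = false).filter
      (fun i => ¬ ∃ y : Fin a, g y = i)) =
      (univ.filter fun i : Fin b =>
        (∀ y : Fin a, g y ≠ i) ∧ (π (i, true)).2 = false) := by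
    rw [Finset.filter_filter]
    apply Finset.filter_congr
    intro i _
    push_neg
    exact and_comm
  rw [numNeg, ← key, h1, h2]

lemma exists_restrict (π : Perm (Fin b × Bool)) (hπ2 : ∀ x, π (π x) = x)
    (hpres : ∀ x : Fin b × Bool, (∃ y, g y = x.1) → ∃ y, g y = (π x).1) :
    ∃ ρ : Perm (Fin a × Bool), ∀ y, π (pmapE g y) = pmapE g (ρ y) := by
  have h : ∀ y : Fin a × Bool, ∃ z, pmapE g z = π (pmapE g y) := by
    intro y
    obtain ⟨v, hv⟩ := hpres (pmapE g y) ⟨y.1, rfl⟩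
    exact ⟨(v, (π (pmapE g y)).2), by rw [pmapE_apply, hv]⟩
  choose f hf using h
  have hinv : Function.Involutive f := by
    intro y
    apply (pmapE g).injective
    rw [hf (f y), hf y, hπ2]
  exact ⟨hinv.toPerm f, fun y => (hf y).symm⟩

end Generic

section Concrete

variable (m : ℕ)

/-- the last index -/
abbrev lst : Fin (m + 3) := Fin.last (m + 2)

/-- embedding skipping the last index -/
def g1 : Fin (m + 2) ↪ Fin (m + 3) := ⟨Fin.castSucc, Fin.castSucc_injective _⟩

variable {m}

lemma g1_ne (y : Fin (m + 2)) : g1 m y ≠ lst m := (Fin.castSucc_lt_last y).ne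

lemma g1_surj {i : Fin (m + 3)} (hi : i ≠ lst m) : ∃ y, g1 m y = i :=
  ⟨i.castPred hi, i.castSucc_castPred hi⟩

lemma g1_compl {i : Fin (m + 3)} : (∀ y, g1 m y ≠ i) ↔ i = lst m := by
  constructor
  · intro h
    by_contra hne
    obtain ⟨y, hy⟩ := g1_surj hne
    exact h y hy
  · rintro rfl y; exact g1_ne y

variable (m)

/-- embedding skipping the last index and `j` -/
def g2 (j : Fin (m + 2)) : Fin (m + 1) ↪ Fin (m + 3) := (j.succAboveEmb).trans (g1 m)

variable {m}

lemma g2_apply (j : Fin (m + 2)) (y : Fin (m + 1)) :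
    g2 m j y = Fin.castSucc (j.succAbove y) := rfl

lemma g2_ne_lst (j : Fin (m + 2)) (y : Fin (m + 1)) : g2 m j y ≠ lst m := g1_ne _

lemma g2_ne_cj (j : Fin (m + 2)) (y : Fin (m + 1)) : g2 m j y ≠ Fin.castSucc j :=
  fun h => (j.succAbove_ne y) (Fin.castSucc_injective _ h)

lemma g2_surj {j : Fin (m + 2)} {i : Fin (m + 3)} (h1 : i ≠ lst m)
    (h2 : i ≠ Fin.castSucc j) : ∃ y, g2 m j y = i := by
  obtain ⟨v, rfl⟩ := g1_surj h1
  have hv : v ≠ j := fun h => h2 (by rw [h]; rfl)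
  obtain ⟨k, hk⟩ := Fin.exists_succAbove_eq hv
  exact ⟨k, by rw [g2_apply, hk]; rfl⟩

lemma g2_compl {j : Fin (m + 2)} {i : Fin (m + 3)} :
    (∀ y, g2 m j y ≠ i) ↔ (i = lst m ∨ i = Fin.castSucc j) := by
  constructor
  · intro h
    by_contra hne
    push_neg at hne
    obtain ⟨y, hy⟩ := g2_surj hne.1 hne.2
    exact h y hy
  · rintro (rfl | rfl) y
    · exact g2_ne_lst j y
    · exact g2_ne_cj j y

lemma bool_beq_beq (s b : Bool) : (s == (s == b)) = b := by cases s <;> cases b <;> rfl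

lemma bool_eq_or (b s : Bool) : b = s ∨ b = !s := by cases s <;> cases b <;> simp

/-- the sign flip at the last index -/
def flipFun : Fin (m + 3) × Bool → Fin (m + 3) × Bool :=
  fun x => if x.1 = lst m then (x.1, !x.2) else x

lemma flipFun_invol : Function.Involutive (flipFun (m := m)) := by
  rintro ⟨x1, x2⟩
  unfold flipFun
  by_cases h : x1 = lst m <;> simp [h]

variable (m)

/-- the completion permutation for the `B`-part bijection -/
noncomputable def c1 (ρ : Perm (Fin (m + 2) × Bool)) : Perm (Fin (m + 3) × Bool) :=
  if Even (numNeg ρ) then 1 else (flipFun_invol (m := m)).toPerm _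

/-- the completion permutation for the `D`-part bijection: a signed
transposition exchanging the last index and `j` with sign `s`. -/
def c2fun (j : Fin (m + 2)) (s : Bool) :
    Fin (m + 3) × Bool → Fin (m + 3) × Bool := fun x =>
  if x.1 = lst m then (Fin.castSucc j, s == x.2)
  else if x.1 = Fin.castSucc j then (lst m, s == x.2) else x

variable {m}

lemma cj_ne_lst (j : Fin (m + 2)) : Fin.castSucc j ≠ lst m := (Fin.castSucc_lt_last j).ne

lemma c2fun_invol (j : Fin (m + 2)) (s : Bool) :
    Function.Involutive (c2fun m j s) := by
  rintro ⟨x1, x2⟩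
  unfold c2fun
  rcases eq_or_ne x1 (lst m) with rfl | h1
  · simp [cj_ne_lst j, bool_beq_beq]
  · rcases eq_or_ne x1 (Fin.castSucc j) with rfl | h2
    · simp [cj_ne_lst j, bool_beq_beq]
    · simp [h1, h2]

variable (m)

def c2 (j : Fin (m + 2)) (s : Bool) : Perm (Fin (m + 3) × Bool) :=
  (c2fun_invol j s).toPerm _

variable {m}

lemma c2_apply (j : Fin (m + 2)) (s : Bool) (x) : c2 m j s x = c2fun m j s x := rfl

lemma c2_lst (j : Fin (m + 2)) (s b : Bool) :
    c2 m j s (lst m, b) = (Fin.castSucc j, s == b) := by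
  rw [c2_apply]; unfold c2fun; simp

lemma c2_cj (j : Fin (m + 2)) (s b : Bool) :
    c2 m j s (Fin.castSucc j, b) = (lst m, s == b) := by
  rw [c2_apply]; unfold c2fun; simp [cj_ne_lst j]

lemma c2_hcr (j : Fin (m + 2)) (s : Bool) (y : Fin (m + 1) × Bool) :
    c2 m j s (pmapE (g2 m j) y) = pmapE (g2 m j) y := by
  rw [c2_apply]; unfold c2fun
  simp [g2_ne_lst j y.1, g2_ne_cj j y.1]

lemma c2_hcc (j : Fin (m + 2)) (s : Bool) :
    ∀ x, (∀ y, g2 m j y ≠ x.1) → ∀ y, g2 m j y ≠ (c2 m j s x).1 := by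
  rintro ⟨x1, x2⟩ hx y
  rw [c2_apply]; unfold c2fun
  rcases eq_or_ne x1 (lst m) with rfl | h1
  · simp [cj_ne_lst j]; exact g2_ne_cj j y
  · rcases eq_or_ne x1 (Fin.castSucc j) with rfl | h2
    · simp [cj_ne_lst j, h1]; exact g2_ne_lst j y
    · simp [h1, h2]; exact hx y

lemma c2_hcs (j : Fin (m + 2)) (s : Bool) :
    ∀ x, c2 m j s (negS x) = negS (c2 m j s x) := by
  rintro ⟨x1, x2⟩
  rw [c2_apply, c2_apply]; unfold c2fun negS
  rcases eq_or_ne x1 (lst m) with rfl | h1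
  · simp [cj_ne_lst j]; cases s <;> cases x2 <;> rfl
  · rcases eq_or_ne x1 (Fin.castSucc j) with rfl | h2
    · simp [cj_ne_lst j, h1]; cases s <;> cases x2 <;> rfl
    · simp [h1, h2]

lemma c2_sq (j : Fin (m + 2)) (s : Bool) : c2 m j s * c2 m j s = 1 :=
  Equiv.ext fun x => (c2fun_invol j s x)

lemma filter_compl_g1_card (P : Fin (m + 3) → Prop) [DecidablePred P] :
    (univ.filter fun i : Fin (m + 3) => (∀ y, g1 m y ≠ i) ∧ P i).card =
      if P (lst m) then 1 else 0 := by
  have he : (univ.filter fun i : Fin (m + 3) => (∀ y, g1 m y ≠ i) ∧ P i) =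
      if P (lst m) then {lst m} else ∅ := by
    ext i
    simp only [mem_filter, mem_univ, true_and, g1_compl]
    by_cases hP : P (lst m)
    · simp only [if_pos hP, mem_singleton]
      exact ⟨fun h => h.1, fun h => ⟨h, h ▸ hP⟩⟩
    · simp only [if_neg hP, notMem_empty, iff_false]
      rintro ⟨rfl, h⟩; exact hP h
  rw [he]
  by_cases hP : P (lst m) <;> simp [hP]

lemma filter_compl_g2_card (j : Fin (m + 2)) (P : Fin (m + 3) → Prop) [DecidablePred P] :
    (univ.filter fun i : Fin (m + 3) => (∀ y, g2 m j y ≠ i) ∧ P i).card =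
      (if P (lst m) then 1 else 0) + (if P (Fin.castSucc j) then 1 else 0) := by
  have he : (univ.filter fun i : Fin (m + 3) => (∀ y, g2 m j y ≠ i) ∧ P i) =
      ({lst m, Fin.castSucc j} : Finset (Fin (m + 3))).filter P := by
    ext i
    simp only [mem_filter, mem_univ, true_and, g2_compl, mem_insert, mem_singleton]
  have hne : lst m ∉ ({Fin.castSucc j} : Finset (Fin (m + 3))) := by
    simp [Ne.symm (cj_ne_lst j)]
  rw [he, Finset.filter_insert, Finset.filter_singleton]
  by_cases h1 : P (lst m) <;> by_cases h2 : P (Fin.castSucc j) <;>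
    simp [h1, h2, Finset.card_insert_of_notMem, hne]

variable (m) in
/-- the extension map for the `B`-part -/
noncomputable def extB (ρ : Perm (Fin (m + 2) × Bool)) : Perm (Fin (m + 3) × Bool) :=
  ext (g1 m) ρ (c1 m ρ)

lemma c1_fst (ρ : Perm (Fin (m + 2) × Bool)) (x : Fin (m + 3) × Bool) :
    (c1 m ρ x).1 = x.1 := by
  unfold c1
  split
  · rfl
  · rw [Function.Involutive.coe_toPerm]
    unfold flipFun
    split <;> rfl

lemma c1_hcr (ρ : Perm (Fin (m + 2) × Bool)) (y : Fin (m + 2) × Bool) :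
    c1 m ρ (pmapE (g1 m) y) = pmapE (g1 m) y := by
  unfold c1
  split
  · rfl
  · rw [Function.Involutive.coe_toPerm]
    unfold flipFun
    rw [if_neg]
    exact g1_ne y.1

lemma c1_hcc (ρ : Perm (Fin (m + 2) × Bool)) :
    ∀ x, (∀ y, g1 m y ≠ x.1) → ∀ y, g1 m y ≠ (c1 m ρ x).1 := by
  intro x hx y
  rw [c1_fst]
  exact hx y

lemma c1_hcs (ρ : Perm (Fin (m + 2) × Bool)) :
    ∀ x, c1 m ρ (negS x) = negS (c1 m ρ x) := by
  rintro ⟨x1, x2⟩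
  unfold c1
  split
  · rfl
  · rw [Function.Involutive.coe_toPerm]
    unfold flipFun negS
    by_cases h : x1 = lst m <;> simp [h]

lemma c1_sq (ρ : Perm (Fin (m + 2) × Bool)) : c1 m ρ * c1 m ρ = 1 := by
  unfold c1
  split
  · rw [one_mul]
  · exact Equiv.ext fun x => flipFun_invol x

lemma c1_lst (ρ : Perm (Fin (m + 2) × Bool)) (b : Bool) :
    c1 m ρ (lst m, b) = if Even (numNeg ρ) then (lst m, b) else (lst m, !b) := by
  unfold c1
  split
  · rw [Perm.one_apply]
  · rw [Function.Involutive.coe_toPerm]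
    unfold flipFun
    simp

lemma extB_mem (ρ : Perm (Fin (m + 2) × Bool)) (y : Fin (m + 2) × Bool) :
    extB m ρ (pmapE (g1 m) y) = pmapE (g1 m) (ρ y) :=
  ext_mem _ _ _ (c1_hcr ρ) y

lemma extB_lst (ρ : Perm (Fin (m + 2) × Bool)) (b : Bool) :
    extB m ρ (lst m, b) = c1 m ρ (lst m, b) :=
  ext_not _ _ _ (c1_hcc ρ) (fun y => g1_ne y)

lemma numNeg_extB (ρ : Perm (Fin (m + 2) × Bool)) :
    numNeg (extB m ρ) = numNeg ρ + (if Even (numNeg ρ) then 0 else 1) := by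
  rw [numNeg_split (g1 m) ρ (extB m ρ)
      (fun i => by rw [show ((g1 m) i, true) = pmapE (g1 m) (i, true) from rfl, extB_mem]; rfl),
    filter_compl_g1_card]
  congr 1
  rw [extB_lst, c1_lst]
  by_cases hE : Even (numNeg ρ) <;> simp [hE]

lemma extB_even (ρ : Perm (Fin (m + 2) × Bool)) : Even (numNeg (extB m ρ)) := by
  rw [numNeg_extB]
  rcases Nat.even_or_odd (numNeg ρ) with hE | hO
  · simpa [hE] using hE
  · rw [if_neg (Nat.not_even_iff_odd.mpr hO)]
    rw [Nat.even_iff, Nat.odd_iff] at *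
    omega

lemma cardA1 (m : ℕ) :
    ((univ : Finset (Perm (Fin (m + 3) × Bool))).filter fun π =>
      (IsSigned π ∧ π * π = 1 ∧ Even (numNeg π)) ∧ (π (lst m, true)).1 = lst m).card =
      numInvB (m + 2) := by
  rw [numInvB]
  refine (Finset.card_bij (fun ρ _ => extB m ρ) ?_ ?_ ?_).symm
  · intro ρ hρ
    simp only [mem_filter, mem_univ, true_and] at hρ ⊢
    obtain ⟨hs, h2⟩ := hρ
    refine ⟨⟨ext_signed _ _ _ hs (c1_hcr ρ) (c1_hcc ρ) (c1_hcs ρ),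
      ext_sq _ _ _ h2 (c1_sq ρ) (c1_hcr ρ) (c1_hcc ρ), extB_even ρ⟩, ?_⟩
    rw [extB_lst, c1_fst]
  · intro ρ1 _ ρ2 _ h
    have h' : extB m ρ1 = extB m ρ2 := h
    refine Equiv.ext fun y => (pmapE (g1 m)).injective ?_
    rw [← extB_mem, ← extB_mem, h']
  · intro π hπ
    simp only [mem_filter, mem_univ, true_and] at hπ
    obtain ⟨⟨hsg, h2, he⟩, hL⟩ := hπ
    have h2' : ∀ x, π (π x) = x := fun x => by
      rw [← Perm.mul_apply, h2, Perm.one_apply]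
    set s : Bool := (π (lst m, true)).2 with hs_def
    have f1 : π (lst m, true) = (lst m, s) := by
      conv_lhs => rw [← Prod.mk.eta (p := π (lst m, true))]
      rw [hL]
    have f2 : π (lst m, false) = (lst m, !s) := by
      have h := hsg (lst m, true)
      rw [f1] at h
      exact h
    have hpres : ∀ x : Fin (m + 3) × Bool,
        (∃ y, g1 m y = x.1) → ∃ y, g1 m y = (π x).1 := by
      intro x hx
      apply g1_surj
      intro hPx
      obtain ⟨y, hy⟩ := hx
      have hx1 : x.1 ≠ lst m := hy ▸ g1_ne y
      have hπx : π x = (lst m, (π x).2) := by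
        conv_lhs => rw [← Prod.mk.eta (p := π x)]
        rw [hPx]
      rcases bool_eq_or ((π x).2) s with hb | hb
      · have hcontra : π x = π (lst m, true) := by rw [hπx, hb, f1]
        exact hx1 (congrArg Prod.fst (π.injective hcontra))
      · have hcontra : π x = π (lst m, false) := by rw [hπx, hb, f2]
        exact hx1 (congrArg Prod.fst (π.injective hcontra))
    obtain ⟨ρ, hspec⟩ := exists_restrict (g1 m) π h2' hpres
    have hρ2 : ρ * ρ = 1 := Equiv.ext fun y => (pmapE (g1 m)).injective (by
      rw [Perm.mul_apply, ← hspec, ← hspec, h2', Perm.one_apply])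
    have hρs : IsSigned ρ := fun y => (pmapE (g1 m)).injective (by
      rw [← hspec, pmapE_negS, hsg, hspec, pmapE_negS])
    have hnn : numNeg π = numNeg ρ + (if s = false then 1 else 0) := by
      rw [numNeg_split (g1 m) ρ π
        (fun i => by
          rw [show ((g1 m) i, true) = pmapE (g1 m) (i, true) from rfl, hspec]; rfl),
        filter_compl_g1_card]
    have hc1 : ∀ b, c1 m ρ (lst m, b) = π (lst m, b) := by
      intro b
      cases hsv : s with
      | true =>
        have hev : Even (numNeg ρ) := by
          rw [hnn, hsv] at he
          simpa using he
        rw [c1_lst, if_pos hev]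
        cases b
        · simp [f2, hsv]
        · simp [f1, hsv]
      | false =>
        have hodd : ¬ Even (numNeg ρ) := by
          rw [hnn, hsv] at he
          simp only [if_pos] at he
          rw [Nat.even_iff] at he ⊢
          omega
        rw [c1_lst, if_neg hodd]
        cases b
        · simp [f2, hsv]
        · simp [f1, hsv]
    refine ⟨ρ, ?_, ?_⟩
    · simp only [mem_filter, mem_univ, true_and]
      exact ⟨hρs, hρ2⟩
    · refine Equiv.ext fun x => ?_
      rcases range_cases (g1 m) x with ⟨y, rfl⟩ | hx
      · rw [extB_mem, ← hspec]
      · have hx1 : x.1 = lst m := g1_compl.mp hx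
        have hxx : x = (lst m, x.2) := by
          conv_lhs => rw [← Prod.mk.eta (p := x)]
          rw [hx1]
        rw [hxx, extB_lst, hc1]

lemma bool_beq_true (s : Bool) : (s == true) = s := by cases s <;> rfl

lemma extD_lst (j : Fin (m + 2)) (s : Bool) (ρ : Perm (Fin (m + 1) × Bool)) (b : Bool) :
    ext (g2 m j) ρ (c2 m j s) (lst m, b) = (Fin.castSucc j, s == b) := by
  rw [ext_not _ _ _ (c2_hcc j s) (fun y => g2_ne_lst j y), c2_lst]

lemma extD_cj (j : Fin (m + 2)) (s : Bool) (ρ : Perm (Fin (m + 1) × Bool)) (b : Bool) :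
    ext (g2 m j) ρ (c2 m j s) (Fin.castSucc j, b) = (lst m, s == b) := by
  rw [ext_not _ _ _ (c2_hcc j s) (fun y => g2_ne_cj j y), c2_cj]

lemma numNeg_extD (j : Fin (m + 2)) (s : Bool) (ρ : Perm (Fin (m + 1) × Bool)) :
    numNeg (ext (g2 m j) ρ (c2 m j s)) = numNeg ρ + (if s = false then 2 else 0) := by
  rw [numNeg_split (g2 m j) ρ _
      (fun i => by
        rw [show ((g2 m j) i, true) = pmapE (g2 m j) (i, true) from rfl,
          ext_mem (g2 m j) ρ (c2 m j s) (c2_hcr j s)]; rfl),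
    filter_compl_g2_card]
  have e1 := extD_lst j s ρ true
  have e2 := extD_cj j s ρ true
  cases hsv : s <;> rw [hsv] at e1 e2 <;> simp [e1, e2]

lemma extD_even (j : Fin (m + 2)) (s : Bool) (ρ : Perm (Fin (m + 1) × Bool))
    (h : Even (numNeg ρ)) : Even (numNeg (ext (g2 m j) ρ (c2 m j s))) := by
  rw [numNeg_extD]
  rw [Nat.even_iff] at h ⊢
  by_cases hsv : s = false <;> simp [hsv] <;> omega

lemma cardA2 (m : ℕ) :
    ((univ : Finset (Perm (Fin (m + 3) × Bool))).filter fun π =>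
      (IsSigned π ∧ π * π = 1 ∧ Even (numNeg π)) ∧ ¬(π (lst m, true)).1 = lst m).card =
      2 * (m + 2) * numInvD (m + 1) := by
  have hcard : (((univ : Finset (Fin (m + 2) × Bool))) ×ˢ
      (univ.filter fun ρ : Perm (Fin (m + 1) × Bool) =>
        IsSigned ρ ∧ ρ * ρ = 1 ∧ Even (numNeg ρ))).card = 2 * (m + 2) * numInvD (m + 1) := by
    rw [Finset.card_product, ← numInvD, Finset.card_univ]
    simp only [Fintype.card_prod, Fintype.card_fin, Fintype.card_bool]
    ring
  rw [← hcard]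
  refine (Finset.card_bij (fun p _ => ext (g2 m p.1.1) p.2 (c2 m p.1.1 p.1.2)) ?_ ?_ ?_).symm
  · rintro ⟨⟨j, s⟩, ρ⟩ hp
    simp only [Finset.mem_product, mem_filter, mem_univ, true_and] at hp
    obtain ⟨hρs, hρ2, hρe⟩ := hp
    simp only [mem_filter, mem_univ, true_and]
    refine ⟨⟨ext_signed _ _ _ hρs (c2_hcr j s) (c2_hcc j s) (c2_hcs j s),
      ext_sq _ _ _ hρ2 (c2_sq j s) (c2_hcr j s) (c2_hcc j s), extD_even j s ρ hρe⟩, ?_⟩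
    rw [extD_lst]
    exact cj_ne_lst j
  · rintro ⟨⟨j1, s1⟩, ρ1⟩ _ ⟨⟨j2, s2⟩, ρ2⟩ _ h
    have h' : ext (g2 m j1) ρ1 (c2 m j1 s1) = ext (g2 m j2) ρ2 (c2 m j2 s2) := h
    have hv := DFunLike.congr_fun h' (lst m, true)
    rw [extD_lst, extD_lst, bool_beq_true, bool_beq_true] at hv
    obtain ⟨hj, hs⟩ := Prod.ext_iff.mp hv
    have hj' : j1 = j2 := Fin.castSucc_injective _ hj
    subst hj'
    subst hs
    have hρ : ρ1 = ρ2 := by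
      refine Equiv.ext fun y => (pmapE (g2 m j1)).injective ?_
      rw [← ext_mem (g2 m j1) ρ1 (c2 m j1 s1) (c2_hcr j1 s1),
        ← ext_mem (g2 m j1) ρ2 (c2 m j1 s1) (c2_hcr j1 s1), h']
    rw [hρ]
  · intro π hπ
    simp only [mem_filter, mem_univ, true_and] at hπ
    obtain ⟨⟨hsg, h2, he⟩, hne⟩ := hπ
    have h2' : ∀ x, π (π x) = x := fun x => by
      rw [← Perm.mul_apply, h2, Perm.one_apply]
    set j : Fin (m + 2) := ((π (lst m, true)).1).castPred hne with hj_def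
    have hcj : Fin.castSucc j = (π (lst m, true)).1 :=
      Fin.castSucc_castPred _ hne
    set s : Bool := (π (lst m, true)).2 with hs_def
    have f1 : π (lst m, true) = (Fin.castSucc j, s) := by
      conv_lhs => rw [← Prod.mk.eta (p := π (lst m, true))]
      rw [hcj]
    have f2 : π (lst m, false) = (Fin.castSucc j, !s) := by
      have h := hsg (lst m, true)
      rw [f1] at h
      exact h
    have f3 : π (Fin.castSucc j, s) = (lst m, true) := by
      have h := h2' (lst m, true)
      rw [f1] at h
      exact h
    have f4 : π (Fin.castSucc j, !s) = (lst m, false) := by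
      have h := h2' (lst m, false)
      rw [f2] at h
      exact h
    have hpres : ∀ x : Fin (m + 3) × Bool,
        (∃ y, g2 m j y = x.1) → ∃ y, g2 m j y = (π x).1 := by
      intro x hx
      obtain ⟨y, hy⟩ := hx
      have hx1 : x.1 ≠ lst m := hy ▸ g2_ne_lst j y
      have hx2 : x.1 ≠ Fin.castSucc j := hy ▸ g2_ne_cj j y
      refine g2_surj ?_ ?_
      · intro hPx
        have hπx : π x = (lst m, (π x).2) := by
          conv_lhs => rw [← Prod.mk.eta (p := π x)]
          rw [hPx]
        cases hb : (π x).2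
        · have hco : π x = π (Fin.castSucc j, !s) := by rw [hπx, hb, f4]
          have hxeq : x = (Fin.castSucc j, !s) := π.injective hco
          have hx2' : x.1 = Fin.castSucc j := by rw [hxeq]
          exact hx2 hx2'
        · have hco : π x = π (Fin.castSucc j, s) := by rw [hπx, hb, f3]
          have hxeq : x = (Fin.castSucc j, s) := π.injective hco
          have hx2' : x.1 = Fin.castSucc j := by rw [hxeq]
          exact hx2 hx2'
      · intro hPx
        have hπx : π x = (Fin.castSucc j, (π x).2) := by
          conv_lhs => rw [← Prod.mk.eta (p := π x)]
          rw [hPx]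
        rcases bool_eq_or ((π x).2) s with hb | hb
        · have hco : π x = π (lst m, true) := by rw [hπx, hb, f1]
          have hxeq : x = (lst m, true) := π.injective hco
          have hx1' : x.1 = lst m := by rw [hxeq]
          exact hx1 hx1'
        · have hco : π x = π (lst m, false) := by rw [hπx, hb, f2]
          have hxeq : x = (lst m, false) := π.injective hco
          have hx1' : x.1 = lst m := by rw [hxeq]
          exact hx1 hx1'
    obtain ⟨ρ, hspec⟩ := exists_restrict (g2 m j) π h2' hpres
    have hρ2 : ρ * ρ = 1 := Equiv.ext fun y => (pmapE (g2 m j)).injective (by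
      rw [Perm.mul_apply, ← hspec, ← hspec, h2', Perm.one_apply])
    have hρs : IsSigned ρ := fun y => (pmapE (g2 m j)).injective (by
      rw [← hspec, pmapE_negS, hsg, hspec, pmapE_negS])
    have hnn : numNeg π = numNeg ρ + (if s = false then 2 else 0) := by
      rw [numNeg_split (g2 m j) ρ π
          (fun i => by
            rw [show ((g2 m j) i, true) = pmapE (g2 m j) (i, true) from rfl, hspec]; rfl),
        filter_compl_g2_card]
      cases hsv : s
      · have hf := f4
        rw [hsv] at hf
        simp only [Bool.not_false] at hf
        simp [f1, hf, hsv]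
      · have hf := f3
        rw [hsv] at hf
        simp [f1, hf, hsv]
    have hρe : Even (numNeg ρ) := by
      rw [hnn, Nat.even_iff] at he
      rw [Nat.even_iff]
      by_cases hsv : s = false
      · rw [if_pos hsv] at he; omega
      · rw [if_neg hsv] at he; omega
    refine ⟨⟨(j, s), ρ⟩, ?_, ?_⟩
    · simp only [Finset.mem_product, mem_filter, mem_univ, true_and]
      exact ⟨hρs, hρ2, hρe⟩
    · refine Equiv.ext fun x => ?_
      by_cases hx1 : x.1 = lst m
      · have hxx : x = (lst m, x.2) := by
          conv_lhs => rw [← Prod.mk.eta (p := x)]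
          rw [hx1]
        rw [hxx, extD_lst]
        cases hb : x.2
        · rw [f2]; cases s <;> rfl
        · rw [f1, bool_beq_true]
      · by_cases hx2 : x.1 = Fin.castSucc j
        · have hxx : x = (Fin.castSucc j, x.2) := by
            conv_lhs => rw [← Prod.mk.eta (p := x)]
            rw [hx2]
          rw [hxx, extD_cj]
          rcases bool_eq_or (x.2) s with hb | hb
          · rw [hb, f3]; cases s <;> rfl
          · rw [hb, f4]; cases s <;> rfl
        · obtain ⟨y, hy⟩ := g2_surj hx1 hx2
          have hxx : x = pmapE (g2 m j) (y, x.2) := by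
            conv_lhs => rw [← Prod.mk.eta (p := x)]
            rw [pmapE_apply, hy]
          rw [hxx, ext_mem (g2 m j) ρ (c2 m j s) (c2_hcr j s), ← hspec]

end Concrete

end DRecAux

theorem involution_count_recurrence_D :
    ∀ n : ℕ, 2 ≤ n → numInvD (n + 1) = numInvB n + 2 * n * numInvD (n - 1) := by
  intro n hn
  obtain ⟨m, rfl⟩ : ∃ m, n = m + 2 := ⟨n - 2, by omega⟩
  have key := Finset.card_filter_add_card_filter_not
    (s := (Finset.univ : Finset (Equiv.Perm (Fin (m + 3) × Bool))).filter fun π =>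
      IsSigned π ∧ π * π = 1 ∧ Even (numNeg π))
    (p := fun π => (π (DRecAux.lst m, true)).1 = DRecAux.lst m)
  rw [Finset.filter_filter, Finset.filter_filter] at key
  have hD : numInvD (m + 2 + 1) =
      ((Finset.univ : Finset (Equiv.Perm (Fin (m + 3) × Bool))).filter fun π =>
        IsSigned π ∧ π * π = 1 ∧ Even (numNeg π)).card := rfl
  rw [hD, ← key, DRecAux.cardA1 m, DRecAux.cardA2 m]
  rfl
end

section
/- Each element of the sequence BCE_n (n ≥ 2) is a binary word of length n with an even number of 1's, the sequence contains all 2^{n-1} such words exactly once, consecutive elements differ in exactly two bits, and the last and first elements also differ in exactly two bits. -/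
/-!
Consecutive words of `BRGC` differ in one bit, so along `BRGC` (reversed) the weights alternate
in parity, and since the last word `10…0` of `BRGC (n + 1)` is odd, the alternating prefixes
`10`, `11` of `altPrefix` are exactly the prefixes `1c` that make each word even. So the second
half of `BCE (n + 3)` is the image of all words of length `n + 1` under
`evenPad : v ↦ 1 c(v) v`, which gives membership and distinctness by induction. Two neighbours
in that half differ in one bit of `v` and in `c`; the junction `0110…0 → 1010…0` and the
wrap-around `110…0 → 00…0` differ in two bits.
-/

/-- The Binary Reflected Gray Code. -/
def BRGC : ℕ → List (List Bool)
  | 0 => [[]]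
  | n + 1 => (BRGC n).map (false :: ·) ++ (BRGC n).reverse.map (true :: ·)

/-- Prefix the words of a list alternately with `10` and `11` (starting with `10`). -/
def altPrefix (l : List (List Bool)) : List (List Bool) :=
  l.mapIdx fun i w => if i % 2 = 0 then true :: false :: w else true :: true :: w

/-- The code `BCE`: `BCE 2 = (00, 11)` and, writing `BCE (n-1) = (u_1,…,u_k)` and
`BRGC (n-2) = (v_1,…,v_k)`,
`BCE n = (0u_1,…,0u_k, 10v_k, 11v_{k-1}, 10v_{k-2}, 11v_{k-3}, …, 11v_1)`. -/
def BCE : ℕ → List (List Bool)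
  | 0 => []
  | 1 => []
  | 2 => [[false, false], [true, true]]
  | n + 3 => (BCE (n + 2)).map (false :: ·) ++ altPrefix ((BRGC (n + 1)).reverse)

/-- The Hamming distance between two binary words. -/
def hammingW (u v : List Bool) : ℕ :=
  ((u.zip v).filter fun p => p.1 ≠ p.2).length

@[simp]
lemma hammingW_cons_cons (a b : Bool) (u v : List Bool) :
    hammingW (a :: u) (b :: v) = (if a = b then 0 else 1) + hammingW u v := by
  cases a <;> cases b <;> simp [hammingW, Nat.add_comm]

@[simp]
lemma hammingW_self (u : List Bool) : hammingW u u = 0 := by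
  induction u <;> simp_all [hammingW]

lemma hammingW_comm (u v : List Bool) : hammingW u v = hammingW v u := by
  induction u generalizing v with
  | nil => cases v <;> rfl
  | cons a u ih =>
    cases v with
    | nil => rfl
    | cons b v => simp [ih, eq_comm]

lemma hammingW_mod_two {u v : List Bool} (h : u.length = v.length) :
    hammingW u v % 2 = (u.count true + v.count true) % 2 := by
  induction u generalizing v with
  | nil => cases v <;> simp_all [hammingW]
  | cons a u ih =>
    cases v with
    | nil => simp at h
    | cons b v =>
      have := ih (by simpa using h)
      cases a <;> cases b <;> simp <;> omega

lemma count_true_getElem_mod_two_of_isChain {l : List (List Bool)} {m : ℕ}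
    (hlen : ∀ w ∈ l, w.length = m) (hl : l.IsChain fun u v => hammingW u v = 1)
    (i : ℕ) (hi : i < l.length) :
    l[i].count true % 2 = (l[0].count true + i) % 2 := by
  induction i with
  | zero => simp
  | succ i ih =>
    have hstep := hammingW_mod_two ((hlen _ (l.getElem_mem (n := i) (by omega))).trans
      (hlen _ (l.getElem_mem hi)).symm)
    rw [hl.getElem i hi] at hstep
    have := ih (by omega)
    omega

lemma length_BRGC (n : ℕ) : (BRGC n).length = 2 ^ n := by
  induction n with
  | zero => rfl
  | succ n ih => simp [BRGC, ih, pow_succ, mul_two]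

lemma mem_BRGC_iff {n : ℕ} {w : List Bool} : w ∈ BRGC n ↔ w.length = n := by
  induction n generalizing w with
  | zero => simp [BRGC]
  | succ n ih =>
    cases w with
    | nil => simp [BRGC]
    | cons b u => cases b <;> simp [BRGC, ih]

lemma nodup_BRGC (n : ℕ) : (BRGC n).Nodup := by
  induction n with
  | zero => simp [BRGC]
  | succ n ih =>
    refine List.Nodup.append (ih.map List.cons_injective)
      ((List.nodup_reverse.2 ih).map List.cons_injective) ?_
    simp [List.Disjoint]

lemma head?_BRGC (n : ℕ) : (BRGC n).head? = some (List.replicate n false) := by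
  induction n with
  | zero => rfl
  | succ n ih => simp [BRGC, ih, List.replicate_succ]

lemma getLast?_BRGC (n : ℕ) :
    (BRGC (n + 1)).getLast? = some (true :: List.replicate n false) := by
  simp [BRGC, head?_BRGC]

lemma isChain_BRGC (n : ℕ) : (BRGC n).IsChain fun u v => hammingW u v = 1 := by
  induction n with
  | zero => simp [BRGC]
  | succ n ih =>
    refine ((List.isChain_map _).2 (by simpa using ih)).append
      ((List.isChain_map _).2 (List.isChain_reverse.2 ?_)) ?_
    · simpa [hammingW_comm] using ih
    · simp only [List.getLast?_map, List.head?_map, List.head?_reverse, Option.mem_def,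
        Option.map_eq_some_iff]
      rintro _ ⟨u, hu, rfl⟩ _ ⟨v, hv, rfl⟩
      simp_all

def evenPad (v : List Bool) : List Bool := true :: (v.count true % 2 == 0) :: v

lemma evenPad_injective : Function.Injective evenPad := fun _ _ h =>
  congrArg (List.drop 2) h

lemma hammingW_evenPad {u v : List Bool} (hlen : u.length = v.length)
    (huv : hammingW u v = 1) : hammingW (evenPad u) (evenPad v) = 2 := by
  have hpar := hammingW_mod_two hlen
  rw [huv] at hpar
  simp only [evenPad, hammingW_cons_cons, huv]
  split_ifs <;> simp_all <;> omega

lemma altPrefix_eq_map_evenPad {l : List (List Bool)}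
    (hl : ∀ i (hi : i < l.length), l[i].count true % 2 = (i + 1) % 2) :
    altPrefix l = l.map evenPad := by
  refine List.ext_getElem (by simp [altPrefix]) fun i h₁ _ => ?_
  have := hl i (by simpa [altPrefix] using h₁)
  simp only [altPrefix, List.getElem_mapIdx, List.getElem_map, evenPad]
  split <;> simp <;> omega

lemma isChain_reverse_BRGC (n : ℕ) :
    (BRGC n).reverse.IsChain fun u v => hammingW u v = 1 :=
  List.isChain_reverse.2 ((isChain_BRGC n).imp fun u v h => by rwa [hammingW_comm])

lemma BCE_add_three (n : ℕ) :
    BCE (n + 3) = (BCE (n + 2)).map (false :: ·) ++ (BRGC (n + 1)).reverse.map evenPad := by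
  rw [BCE, altPrefix_eq_map_evenPad]
  intro i hi
  have hhead : (BRGC (n + 1)).reverse[0] = true :: List.replicate n false :=
    Option.some_injective _ (by
      rw [← List.getElem?_eq_getElem, ← List.head?_eq_getElem?, List.head?_reverse,
        getLast?_BRGC])
  have := count_true_getElem_mod_two_of_isChain (m := n + 1) (by simp [mem_BRGC_iff])
    (isChain_reverse_BRGC (n + 1)) i hi
  simpa [hhead, List.count_replicate, Nat.add_comm] using this

lemma length_BCE (n : ℕ) : (BCE (n + 2)).length = 2 ^ (n + 1) := by
  induction n with
  | zero => rfl
  | succ n ih =>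
    rw [BCE_add_three, List.length_append, List.length_map, List.length_map, List.length_reverse,
      ih, length_BRGC, pow_succ 2 (n + 1), mul_two]

lemma mem_BCE_iff {n : ℕ} {w : List Bool} :
    w ∈ BCE (n + 2) ↔ w.length = n + 2 ∧ Even (w.count true) := by
  induction n generalizing w with
  | zero =>
    match w with
    | [] | [_] | _ :: _ :: _ :: _ => simp [BCE]
    | [a, b] => cases a <;> cases b <;> simp [BCE]
  | succ n ih =>
    rw [BCE_add_three]
    match w with
    | [] => simp [evenPad]
    | false :: u => simp [ih, evenPad]
    | [true] => simp [evenPad]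
    | true :: c :: v =>
      cases c <;> simp [evenPad, mem_BRGC_iff, Nat.even_add_one, Nat.even_iff]

lemma nodup_BCE (n : ℕ) : (BCE (n + 2)).Nodup := by
  induction n with
  | zero => decide
  | succ n ih =>
    rw [BCE_add_three]
    refine (ih.map List.cons_injective).append
      ((List.nodup_reverse.2 (nodup_BRGC _)).map evenPad_injective) ?_
    simp [List.Disjoint, evenPad]

lemma head?_BCE (n : ℕ) : (BCE (n + 2)).head? = some (List.replicate (n + 2) false) := by
  induction n with
  | zero => rfl
  | succ n ih => simp [BCE_add_three, ih, List.replicate_succ]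

lemma getLast?_BCE (n : ℕ) :
    (BCE (n + 2)).getLast? = some (true :: true :: List.replicate n false) := by
  cases n with
  | zero => rfl
  | succ n => simp [BCE_add_three, head?_BRGC, evenPad, List.count_replicate, List.replicate_succ]

lemma isChain_BCE (n : ℕ) : (BCE (n + 2)).IsChain fun u v => hammingW u v = 2 := by
  induction n with
  | zero => simp [BCE]
  | succ n ih =>
    rw [BCE_add_three]
    refine ((List.isChain_map _).2 (by simpa using ih)).append
      ((List.isChain_map _).2 ((isChain_reverse_BRGC _).imp_of_mem_imp fun u v hu hv h =>
        hammingW_evenPad ?_ h)) ?_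
    · simp_all [mem_BRGC_iff]
    · simp [getLast?_BCE, getLast?_BRGC, evenPad, List.count_replicate]

/-- `BCE n` lists exactly once each of the `2^(n-1)` binary words of length `n` with an
even number of `1`s, consecutive elements differ in exactly two bits, and so do the last
and the first elements. -/
theorem BCE_gray_code (n : ℕ) (hn : 2 ≤ n) :
    (BCE n).Nodup ∧ (BCE n).length = 2 ^ (n - 1) ∧
    (∀ w : List Bool, w ∈ BCE n ↔ w.length = n ∧ Even (w.count true)) ∧
    (∀ i : ℕ, i + 1 < (BCE n).length →
      hammingW ((BCE n).getD i []) ((BCE n).getD (i + 1) []) = 2) ∧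
    hammingW ((BCE n).getD ((BCE n).length - 1) []) ((BCE n).getD 0 []) = 2 := by
  obtain ⟨m, rfl⟩ : ∃ m, n = m + 2 := ⟨n - 2, by omega⟩
  refine ⟨nodup_BCE m, by simp [length_BCE], fun w => mem_BCE_iff, fun i hi => ?_, ?_⟩
  · rw [List.getD_eq_getElem _ _ (by omega), List.getD_eq_getElem _ _ hi]
    exact (isChain_BCE m).getElem i hi
  · rw [List.getD_eq_getElem?_getD, List.getD_eq_getElem?_getD, ← List.getLast?_eq_getElem?,
      ← List.head?_eq_getElem?, getLast?_BCE, head?_BCE]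
    simp [List.replicate_succ]
end

section
/- There is no cyclic listing of all involutions of S_n, for n ≥ 3, in which every two cyclically consecutive involutions have Hamming distance exactly 2; equivalently, every Hamilton cycle on the involutions of S_n (with edges between involutions at Hamming distance ≤ 3) must contain a pair of consecutive involutions at Hamming distance 3. -/
/-!
Two permutations at Hamming distance 2 differ by a transposition, so they have opposite signs.
Along a cyclic listing of the involutions of `S_n` in which consecutive entries are at distance 2
the signs would therefore alternate, forcing the signed count `D n = ∑_{σ² = 1} sign σ` to vanish.
Splitting the involutions of `Option α` according to the image of `none` gives
`D (m + 2) = D (m + 1) - (m + 1) D m`, hence `D (m + 3) = -(m + 1) (D (m + 1) + D m)`.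
Modulo 3 the sequence `D` runs `1, 1, 0, 1, 1, 0, …`, so `D (m + 1) + D m` is never divisible by 3
and `D n ≠ 0` for `n ≥ 3`.
-/

/-- The Hamming distance between two permutations of `[n]`: the number of positions
where they differ. -/
def hammingA {n : ℕ} (π σ : Equiv.Perm (Fin n)) : ℕ :=
  (Finset.univ.filter fun i : Fin n => π i ≠ σ i).card

open Equiv Equiv.Perm Finset

theorem optionCongr_mul {α : Type*} (e f : Perm α) :
    optionCongr (e * f) = optionCongr e * optionCongr f :=
  optionCongr_trans f e

theorem optionCongr_mul_self_eq_one_iff {α : Type*} (e : Perm α) :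
    optionCongr e * optionCongr e = 1 ↔ e * e = 1 := by
  rw [← optionCongr_mul, Perm.one_def, Perm.one_def, ← optionCongr_refl,
    optionCongr_injective.eq_iff]

section SwapNone

variable {α : Type*} [DecidableEq α]

theorem swap_none_mul_optionCongr_mul_self_eq_one_iff (a : α) (e : Perm α) :
    swap none (some a) * optionCongr e * (swap none (some a) * optionCongr e) = 1 ↔
      e a = a ∧ e * e = 1 := by
  set σ := swap none (some a) * optionCongr e
  have hsq : e a = a → σ * σ = optionCongr e * optionCongr e := by
    intro hea
    have hcomm : optionCongr e * swap none (some a) = swap none (some a) * optionCongr e := by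
      rw [mul_swap_eq_swap_mul]
      simp [hea]
    simp only [σ]
    rw [mul_assoc, ← mul_assoc (optionCongr e), hcomm, mul_assoc, ← mul_assoc, swap_mul_self,
      one_mul]
  constructor
  · intro h
    have hea : e a = a := by
      have : σ (σ none) = none := by rw [← Perm.mul_apply, h, one_apply]
      simpa [σ, swap_apply_eq_iff] using this
    exact ⟨hea, (optionCongr_mul_self_eq_one_iff e).1 (hsq hea ▸ h)⟩
  · rintro ⟨hea, he⟩
    rw [hsq hea, optionCongr_mul_self_eq_one_iff]
    exact he

theorem sign_swap_none_mul_optionCongr [Fintype α] (a : α) (e : Perm α) :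
    sign (swap none (some a) * optionCongr e) = -sign e := by
  simp

end SwapNone

def involutionSignSum (α : Type*) [Fintype α] [DecidableEq α] : ℤ :=
  ∑ σ : Perm α with σ * σ = 1, (sign σ : ℤ)

section InvolutionSignSum

variable {α β : Type*} [Fintype α] [DecidableEq α] [Fintype β] [DecidableEq β]

theorem involutionSignSum_congr (e : α ≃ β) : involutionSignSum α = involutionSignSum β := by
  refine sum_equiv e.permCongr (fun σ => ?_) (fun σ _ => by simp)
  simp only [mem_filter, mem_univ, true_and]
  show _ ↔ e.permCongrHom σ * e.permCongrHom σ = 1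
  rw [← map_mul, MulEquiv.map_eq_one_iff]

theorem involutionSignSum_eq_of_card_eq (h : Fintype.card α = Fintype.card β) :
    involutionSignSum α = involutionSignSum β :=
  involutionSignSum_congr (Fintype.equivOfCardEq h)

theorem sum_sign_involutions_fixing (a : α) :
    ∑ e : Perm α with e a = a ∧ e * e = 1, (sign e : ℤ) = involutionSignSum {x // x ≠ a} := by
  symm
  refine sum_nbij ofSubtype (fun u hu => ?_) ofSubtype_injective.injOn (fun e he => ?_)
    (fun u _ => by simp)
  · simp only [mem_filter, mem_univ, true_and] at hu ⊢
    exact ⟨ofSubtype_apply_of_not_mem u (not_not.2 rfl), by rw [← map_mul, hu, map_one]⟩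
  · simp only [mem_coe, mem_filter, mem_univ, true_and] at he
    have hfix : ∀ x, e x ≠ a ↔ x ≠ a := fun x => e.injective.ne_iff' he.1
    have hofs : ofSubtype (e.subtypePerm hfix) = e :=
      ofSubtype_subtypePerm (p := (· ≠ a)) hfix fun x hx hxa => hx (hxa ▸ he.1)
    refine ⟨e.subtypePerm hfix, ?_, hofs⟩
    simp only [mem_coe, mem_filter, mem_univ, true_and]
    exact ofSubtype_injective (by rw [map_mul, hofs, he.2, map_one])

theorem involutionSignSum_option :
    involutionSignSum (Option α) =
      involutionSignSum α - ∑ a : α, involutionSignSum {x // x ≠ a} := by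
  rw [involutionSignSum, sum_filter, ← decomposeOption.symm.sum_comp, Fintype.sum_prod_type,
    Fintype.sum_option, sub_eq_add_neg, ← sum_neg_distrib]
  congr 1
  · simp only [involutionSignSum, sum_filter, decomposeOption_symm_apply, swap_self,
      ← Perm.one_def, one_mul, optionCongr_mul_self_eq_one_iff, optionCongr_sign]
  · refine sum_congr rfl fun a _ => ?_
    rw [← sum_sign_involutions_fixing, sum_filter, ← sum_neg_distrib]
    refine sum_congr rfl fun e _ => ?_
    simp only [decomposeOption_symm_apply, swap_none_mul_optionCongr_mul_self_eq_one_iff,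
      sign_swap_none_mul_optionCongr]
    split_ifs <;> simp

end InvolutionSignSum

theorem involutionSignSum_fin_zero : involutionSignSum (Fin 0) = 1 := by decide

theorem involutionSignSum_fin_one : involutionSignSum (Fin 1) = 1 := by decide

theorem involutionSignSum_fin_add_two (m : ℕ) :
    involutionSignSum (Fin (m + 2)) =
      involutionSignSum (Fin (m + 1)) - (m + 1) * involutionSignSum (Fin m) := by
  have hcard (a : Fin (m + 1)) : Fintype.card {x // x ≠ a} = Fintype.card (Fin m) := by
    simp [Fintype.card_subtype_compl]
  rw [involutionSignSum_eq_of_card_eq (β := Option (Fin (m + 1))) (by simp),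
    involutionSignSum_option, sum_congr rfl fun a _ => involutionSignSum_eq_of_card_eq (hcard a),
    sum_const, card_univ, Fintype.card_fin, nsmul_eq_mul]
  push_cast
  rfl

theorem involutionSignSum_fin_add_three (m : ℕ) :
    involutionSignSum (Fin (m + 3)) =
      -(m + 1) * (involutionSignSum (Fin (m + 1)) + involutionSignSum (Fin m)) := by
  rw [involutionSignSum_fin_add_two, involutionSignSum_fin_add_two]
  push_cast
  ring

theorem involutionSignSum_fin_mod_three (k : ℕ) :
    (involutionSignSum (Fin (3 * k)) : ZMod 3) = 1 ∧
      (involutionSignSum (Fin (3 * k + 1)) : ZMod 3) = 1 ∧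
      (involutionSignSum (Fin (3 * k + 2)) : ZMod 3) = 0 := by
  have step (m : ℕ) := congrArg (Int.cast : ℤ → ZMod 3) (involutionSignSum_fin_add_two m)
  push_cast at step
  induction k with
  | zero =>
    have h2 := step 0
    simp_all [involutionSignSum_fin_zero, involutionSignSum_fin_one]
  | succ k ih =>
    obtain ⟨-, h1, h2⟩ := ih
    have h3 : (involutionSignSum (Fin (3 * k + 3)) : ZMod 3) = 1 := by
      rw [step, h2, h1]
      push_cast
      ring_nf
      reduce_mod_char
    have h4 : (involutionSignSum (Fin (3 * k + 4)) : ZMod 3) = 1 := by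
      rw [step, h3, h2]
      ring
    refine ⟨h3, h4, ?_⟩
    rw [show 3 * (k + 1) + 2 = 3 * k + 3 + 2 by ring, step, h4, h3]
    push_cast
    ring_nf
    reduce_mod_char

theorem involutionSignSum_fin_add_one_add_ne_zero_mod_three (m : ℕ) :
    ((involutionSignSum (Fin (m + 1)) + involutionSignSum (Fin m) : ℤ) : ZMod 3) ≠ 0 := by
  obtain ⟨k, r, hr, rfl⟩ : ∃ k r, r < 3 ∧ m = 3 * k + r :=
    ⟨m / 3, m % 3, Nat.mod_lt _ (by norm_num), (Nat.div_add_mod m 3).symm⟩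
  obtain ⟨h0, h1, h2⟩ := involutionSignSum_fin_mod_three k
  have h3 := (involutionSignSum_fin_mod_three (k + 1)).1
  push_cast
  interval_cases r
  · rw [add_zero, h1, h0]; decide
  · rw [h2, h1]; decide
  · rw [show 3 * k + 2 + 1 = 3 * (k + 1) by ring, h3, h2]; decide

theorem involutionSignSum_fin_ne_zero {n : ℕ} (hn : 3 ≤ n) : involutionSignSum (Fin n) ≠ 0 := by
  obtain ⟨m, rfl⟩ : ∃ m, n = m + 3 := ⟨n - 3, by omega⟩
  rw [involutionSignSum_fin_add_three]
  refine mul_ne_zero (by omega) fun h => ?_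
  exact involutionSignSum_fin_add_one_add_ne_zero_mod_three m (by rw [h, Int.cast_zero])

theorem sign_eq_neg_of_card_filter_ne_eq_two {α : Type*} [Fintype α] [DecidableEq α]
    {π σ : Perm α} (h : #{i | π i ≠ σ i} = 2) : sign σ = -sign π := by
  have hsupp : (π⁻¹ * σ).support = ({i | π i ≠ σ i} : Finset α) := by
    ext i
    simp [eq_symm_apply, eq_comm]
  rw [← hsupp] at h
  obtain ⟨a, b, hab, hswap⟩ := card_support_eq_two.mp h
  calc sign σ = sign (π * (π⁻¹ * σ)) := by rw [mul_inv_cancel_left]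
    _ = -sign π := by rw [map_mul, hswap, sign_swap hab, mul_neg_one]

theorem sum_range_eq_zero_of_cyclically_alternating {G : Type*} [AddCommGroup G]
    [IsAddTorsionFree G] {s : ℕ → G} {N : ℕ} (h : ∀ i, i + 1 < N → s (i + 1) = -s i)
    (hcyc : s 0 = -s (N - 1)) : ∑ i ∈ range N, s i = 0 := by
  cases N with
  | zero => simp
  | succ M =>
    refine self_eq_neg.mp ?_
    calc ∑ i ∈ range (M + 1), s i = ∑ i ∈ range M, s (i + 1) + s 0 := sum_range_succ' _ _
      _ = ∑ i ∈ range M, -s i + -s M := by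
        rw [sum_congr rfl fun i hi => h i (by simp at hi; omega), hcyc, Nat.add_sub_cancel]
      _ = -∑ i ∈ range (M + 1), s i := by rw [sum_range_succ, neg_add, sum_neg_distrib]

/-- For `n ≥ 3` there is no cyclic listing of all involutions of `S_n` in which every
two cyclically consecutive involutions have Hamming distance exactly `2`. -/
theorem no_distance_two_hamilton_cycle_A (n : ℕ) (hn : 3 ≤ n) :
    ¬ ∃ L : List (Equiv.Perm (Fin n)),
      L.Nodup ∧ (∀ π : Equiv.Perm (Fin n), π ∈ L ↔ π * π = 1) ∧
      (∀ i : ℕ, i + 1 < L.length → hammingA (L.getD i 1) (L.getD (i + 1) 1) = 2) ∧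
      hammingA (L.getD (L.length - 1) 1) (L.getD 0 1) = 2 := by
  rintro ⟨L, hnd, hmem, hadj, hcyc⟩
  have hinvolutions : ({σ | σ * σ = 1} : Finset (Perm (Fin n))) = L.toFinset := by
    ext σ
    simp [hmem]
  have hsum : involutionSignSum (Fin n) = ∑ i ∈ range L.length, (sign (L.getD i 1) : ℤ) := by
    rw [involutionSignSum, hinvolutions, List.sum_toFinset _ hnd, ← Fin.sum_univ_fun_getElem,
      ← Fin.sum_univ_eq_sum_range]
    simp
  refine involutionSignSum_fin_ne_zero hn (hsum.trans ?_)
  refine sum_range_eq_zero_of_cyclically_alternating (fun i hi => ?_) ?_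
  · rw [sign_eq_neg_of_card_filter_ne_eq_two (hadj i hi), Units.val_neg]
  · rw [sign_eq_neg_of_card_filter_ne_eq_two hcyc, Units.val_neg]
end

section
/- The graph on the involutions of D_3 (even-signed permutations of {1,2,3}), with edges between involutions at Hamming distance exactly 2, has no Hamilton cycle but has a Hamilton path. -/
/-- An involution of `D_n`. -/
def IsInvD {n : ℕ} (π : Equiv.Perm (Fin n × Bool)) : Prop :=
  IsSigned π ∧ π * π = 1 ∧ Even (numNeg π)

/-- The Hamming distance between signed permutations. -/
def hammingB {n : ℕ} (π σ : Equiv.Perm (Fin n × Bool)) : ℕ :=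
  (Finset.univ.filter fun i : Fin n => π (i, true) ≠ σ (i, true)).card

/-!
The identity is adjacent to every other involution of `D₃`. For each pair `j ≠ k` of positions,
the transposition `(j k)` and its negated version `(j -k)` have degree three: they are adjacent to
each other, to the identity and to the sign change at `j` and `k`, and to nothing else. A Hamilton
cycle cannot close the triangle these three form, so it enters or leaves each of the three blocks
`{(j k), (j -k)}` through the identity, which would then have three neighbours on the cycle.
-/

open Equiv Finset

section SignedPerm

variable {n : ℕ}

instance : DecidablePred (IsSigned (n := n)) := fun π =>
  inferInstanceAs (Decidable (∀ x, π (negS x) = negS (π x)))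

instance : DecidablePred (IsInvD (n := n)) := fun π =>
  inferInstanceAs (Decidable (IsSigned π ∧ π * π = 1 ∧ Even (numNeg π)))

theorem hammingB_comm (π σ : Perm (Fin n × Bool)) : hammingB π σ = hammingB σ π := by
  simp only [hammingB, ne_comm]

def hammingTwoGraph (n : ℕ) : SimpleGraph (Perm (Fin n × Bool)) where
  Adj π σ := hammingB π σ = 2
  symm := ⟨fun π σ h => by rwa [hammingB_comm]⟩
  loopless := ⟨fun π h => by simp [hammingB] at h⟩

def oneLine (π : Perm (Fin n × Bool)) (i : Fin n) : Fin n × Bool := π (i, true)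

/-- `(i, ε) ↦ ε · t i`, where `true` encodes the sign `+`. -/
def ofOneLine (t : Fin n → Fin n × Bool) (x : Fin n × Bool) : Fin n × Bool :=
  ((t x.1).1, x.2 == (t x.1).2)

theorem IsSigned.apply_eq_ofOneLine {π : Perm (Fin n × Bool)} (h : IsSigned π)
    (x : Fin n × Bool) : π x = ofOneLine (oneLine π) x := by
  obtain ⟨i, _ | _⟩ := x
  · rw [show ((i, false) : Fin n × Bool) = negS (i, true) from rfl, h]
    simp only [negS, ofOneLine, oneLine]
    obtain ⟨j, _ | _⟩ := π (i, true) <;> rfl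
  · simp only [ofOneLine, oneLine, Bool.true_beq]

theorem IsSigned.ext_oneLine {π σ : Perm (Fin n × Bool)} (hπ : IsSigned π) (hσ : IsSigned σ)
    (h : oneLine π = oneLine σ) : π = σ :=
  Equiv.ext fun x => by rw [hπ.apply_eq_ofOneLine, hσ.apply_eq_ofOneLine, h]

theorem IsInvD.involutive_ofOneLine {π : Perm (Fin n × Bool)} (h : IsInvD π) :
    Function.Involutive (ofOneLine (oneLine π)) := fun x => by
  rw [← h.1.apply_eq_ofOneLine, ← h.1.apply_eq_ofOneLine, ← Perm.mul_apply, h.2.1, Perm.one_apply]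

def signFlip (i : Fin n) : Perm (Fin n × Bool) := swap (i, true) (i, false)

def signedSwap (i j : Fin n) : Perm (Fin n × Bool) := (swap i j).prodCongr (Equiv.refl Bool)

def flipPair (i j : Fin n) : Perm (Fin n × Bool) := signFlip i * signFlip j

def negSwap (i j : Fin n) : Perm (Fin n × Bool) := signedSwap i j * flipPair i j

end SignedPerm

namespace Equiv.Perm

variable {α : Type*} [Fintype α] [DecidableEq α] {s : Perm α}

theorem inv_apply_mem_support {x : α} : s⁻¹ x ∈ s.support ↔ x ∈ s.support := by
  rw [← support_inv, apply_mem_support]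

theorem IsCycle.pow_apply_ne_self (hs : s.IsCycle) {x : α} (hx : x ∈ s.support)
    {k : ℕ} (hk₀ : 0 < k) (hk : k < #s.support) : (s ^ k) x ≠ x := by
  rw [Ne, ← hs.pow_eq_one_iff' (mem_support.mp hx), ← orderOf_dvd_iff_pow_eq_one, hs.orderOf]
  exact Nat.not_dvd_of_pos_of_lt hk₀ hk

end Equiv.Perm

namespace SimpleGraph

variable {α : Type*} [Fintype α] [DecidableEq α] {G : SimpleGraph α} {s : Perm α}

/-- `s` is a Hamiltonian cycle of the subgraph of `G` induced on `s.support`. -/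
def IsCyclicTour (G : SimpleGraph α) (s : Perm α) : Prop :=
  s.IsCycle ∧ ∀ x ∈ s.support, G.Adj x (s x)

theorem isCyclicTour_formPerm {L : List α} {d : α} (hN : L.Nodup) (hlen : 2 ≤ L.length)
    (hA : ∀ i, i + 1 < L.length → G.Adj (L.getD i d) (L.getD (i + 1) d))
    (hW : G.Adj (L.getD (L.length - 1) d) (L.getD 0 d)) : G.IsCyclicTour L.formPerm := by
  refine ⟨List.isCycle_formPerm hN hlen, fun x hx => ?_⟩
  rw [List.support_formPerm_of_nodup _ hN (by rintro y rfl; simp at hlen), List.mem_toFinset] at hx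
  obtain ⟨i, hi, rfl⟩ := List.getElem_of_mem hx
  rw [List.formPerm_apply_getElem _ hN]
  rcases Nat.lt_or_ge (i + 1) L.length with h | h
  · have := hA i h
    rw [List.getD_eq_getElem _ _ hi, List.getD_eq_getElem _ _ h] at this
    simpa only [Nat.mod_eq_of_lt h]
  · obtain rfl : i = L.length - 1 := by omega
    rw [List.getD_eq_getElem _ _ hi, List.getD_eq_getElem _ _ (by omega)] at hW
    simpa only [Nat.sub_add_cancel (by omega : 1 ≤ L.length), Nat.mod_self]

namespace IsCyclicTour

theorem inv (h : G.IsCyclicTour s) : G.IsCyclicTour s⁻¹ := by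
  refine ⟨h.1.inv, fun x hx => ?_⟩
  rw [Perm.support_inv, ← Perm.inv_apply_mem_support] at hx
  simpa using (h.2 _ hx).symm

theorem adj_inv_apply (h : G.IsCyclicTour s) {x : α} (hx : x ∈ s.support) : G.Adj x (s⁻¹ x) :=
  h.inv.2 x (by rwa [Perm.support_inv])

variable (h : G.IsCyclicTour s) (hcard : 3 < #s.support)
include h hcard

theorem eq_of_consecutive {z a p : α} (hp : p ∈ s.support)
    (hNp : ∀ x ∈ s.support, G.Adj p x → x = z ∨ x = a ∨ x = s p)
    (hNq : ∀ x ∈ s.support, G.Adj (s p) x → x = z ∨ x = a ∨ x = p) :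
    s z = p ∨ s⁻¹ z = s p := by
  have hq : s p ∈ s.support := Perm.apply_mem_support.mpr hp
  rcases hNp _ (Perm.inv_apply_mem_support.mpr hp) (h.adj_inv_apply hp) with hz | ha | hq'
  · exact .inl (by simp [← hz])
  · rcases hNq _ (Perm.apply_mem_support.mpr hq) (h.2 _ hq) with hz | ha' | hp'
    · exact .inr (by simp [← hz])
    -- otherwise the tour runs `a → p → s p → a`
    · refine absurd (?_ : s (s (s p)) = p) (h.1.pow_apply_ne_self hp three_pos hcard)
      simp [ha', ← ha]
    · exact absurd hp' (h.1.pow_apply_ne_self hp two_pos (by omega))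
  · refine absurd (?_ : s (s p) = p) (h.1.pow_apply_ne_self hp two_pos (by omega))
    simp [← hq']

theorem eq_of_pair {z a p q : α} (hp : p ∈ s.support)
    (hNp : ∀ x ∈ s.support, G.Adj p x → x = z ∨ x = a ∨ x = q)
    (hNq : ∀ x ∈ s.support, G.Adj q x → x = z ∨ x = a ∨ x = p) :
    s z = p ∨ s z = q ∨ s⁻¹ z = p ∨ s⁻¹ z = q := by
  rcases hNp _ (Perm.apply_mem_support.mpr hp) (h.2 p hp) with hz | ha | rfl
  · simp [← hz]
  · rcases hNp _ (Perm.inv_apply_mem_support.mpr hp) (h.adj_inv_apply hp) with hz | ha' | rfl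
    · simp [← hz]
    · refine absurd (?_ : s (s p) = p) (h.1.pow_apply_ne_self hp two_pos (by omega))
      simp [ha, ← ha']
    · have := h.inv.eq_of_consecutive (by rwa [Perm.support_inv]) (by rwa [Perm.support_inv])
        (by rwa [Perm.support_inv]) (by rwa [Perm.support_inv])
      rw [inv_inv] at this
      tauto
  · have := h.eq_of_consecutive hcard hp hNp hNq
    tauto

end IsCyclicTour
end SimpleGraph

def involutionsD3 : List (Perm (Fin 3 × Bool)) :=
  [signedSwap 1 2, negSwap 1 2, flipPair 1 2, flipPair 0 2, signedSwap 0 2, negSwap 0 2, 1,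
    signedSwap 0 1, negSwap 0 1, flipPair 0 1]

set_option maxRecDepth 10000 in
theorem isInvD_of_mem_involutionsD3 : ∀ π ∈ involutionsD3, IsInvD π := by decide

set_option maxRecDepth 10000 in
theorem exists_mem_involutionsD3_oneLine_eq :
    ∀ t : Fin 3 → Fin 3 × Bool, (∀ x, ofOneLine t (ofOneLine t x) = x) →
      Even #{i | (t i).2 = false} → ∃ σ ∈ involutionsD3, oneLine σ = t := by
  decide

theorem mem_involutionsD3_iff (π : Perm (Fin 3 × Bool)) : π ∈ involutionsD3 ↔ IsInvD π := by
  refine ⟨isInvD_of_mem_involutionsD3 π, fun h => ?_⟩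
  obtain ⟨σ, hσ, hσπ⟩ :=
    exists_mem_involutionsD3_oneLine_eq _ h.involutive_ofOneLine h.2.2
  rwa [h.1.ext_oneLine (isInvD_of_mem_involutionsD3 σ hσ).1 hσπ.symm]

theorem nodup_involutionsD3 : involutionsD3.Nodup := by decide

theorem hammingB_involutionsD3_getD_succ (i : ℕ) (hi : i + 1 < involutionsD3.length) :
    hammingB (involutionsD3.getD i 1) (involutionsD3.getD (i + 1) 1) = 2 := by
  have hi9 : i < 9 := Nat.succ_lt_succ_iff.mp hi
  interval_cases i <;> decide

theorem signedSwap_mem_involutionsD3 : ∀ j k : Fin 3, j ≠ k → signedSwap j k ∈ involutionsD3 := by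
  decide

theorem eq_of_hammingB_signedSwap : ∀ j k : Fin 3, j ≠ k → ∀ π ∈ involutionsD3,
    hammingB (signedSwap j k) π = 2 → π = 1 ∨ π = flipPair j k ∨ π = negSwap j k := by
  decide

theorem eq_of_hammingB_negSwap : ∀ j k : Fin 3, j ≠ k → ∀ π ∈ involutionsD3,
    hammingB (negSwap j k) π = 2 → π = 1 ∨ π = flipPair j k ∨ π = signedSwap j k := by
  decide

theorem not_all_swap_blocks_meet : ∀ x ∈ involutionsD3, ∀ y ∈ involutionsD3,
    ¬ ∀ j k : Fin 3, j ≠ k → x = signedSwap j k ∨ x = negSwap j k ∨ y = signedSwap j k ∨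
      y = negSwap j k := by
  decide

/-- The graph on the involutions of `D_3` with edges between involutions at Hamming
distance exactly `2` has no Hamilton cycle but has a Hamilton path. -/
theorem D3_no_hamilton_cycle_but_path :
    (¬ ∃ L : List (Equiv.Perm (Fin 3 × Bool)),
      L.Nodup ∧ (∀ π, π ∈ L ↔ IsInvD π) ∧
      (∀ i : ℕ, i + 1 < L.length → hammingB (L.getD i 1) (L.getD (i + 1) 1) = 2) ∧
      hammingB (L.getD (L.length - 1) 1) (L.getD 0 1) = 2) ∧
    (∃ L : List (Equiv.Perm (Fin 3 × Bool)),
      L.Nodup ∧ (∀ π, π ∈ L ↔ IsInvD π) ∧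
      (∀ i : ℕ, i + 1 < L.length → hammingB (L.getD i 1) (L.getD (i + 1) 1) = 2)) := by
  refine ⟨?_, involutionsD3, nodup_involutionsD3, mem_involutionsD3_iff,
    hammingB_involutionsD3_getD_succ⟩
  rintro ⟨L, hN, hM, hA, hW⟩
  have hperm : L.Perm involutionsD3 := (List.perm_ext_iff_of_nodup hN nodup_involutionsD3).2
    fun π => by rw [hM, mem_involutionsD3_iff]
  have hlen : L.length = 10 := hperm.length_eq
  set s := L.formPerm
  have hsupp : s.support = L.toFinset :=
    List.support_formPerm_of_nodup _ hN (by rintro x rfl; simp at hlen)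
  have hmem (x) : x ∈ s.support ↔ x ∈ involutionsD3 := by
    rw [hsupp, List.mem_toFinset, hperm.mem_iff]
  have hcard : 3 < #s.support := by rw [hsupp, List.toFinset_card_of_nodup hN, hlen]; decide
  have htour : (hammingTwoGraph 3).IsCyclicTour s :=
    SimpleGraph.isCyclicTour_formPerm (G := hammingTwoGraph 3) hN (by omega) hA hW
  have h1 : (1 : Perm (Fin 3 × Bool)) ∈ s.support := (hmem 1).2 (by decide)
  refine not_all_swap_blocks_meet _ ((hmem _).1 (Perm.apply_mem_support.2 h1))
    _ ((hmem _).1 (Perm.inv_apply_mem_support.2 h1)) fun j k hjk => ?_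
  exact htour.eq_of_pair hcard ((hmem _).2 (signedSwap_mem_involutionsD3 j k hjk))
    (fun x hx => eq_of_hammingB_signedSwap j k hjk x ((hmem x).1 hx))
    (fun x hx => eq_of_hammingB_negSwap j k hjk x ((hmem x).1 hx))
end
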